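/- Suppose 2·1_R is not a zero divisor in R, and let N be any positive integer. An R-linear derivation D on R[X_1,…,X_N] satisfies D(X·X) = 0 if and only if there exist polynomials c_{jk} ∈ R[X_1,…,X_N] (for 1 ≤ j < k ≤ N) such that D(p) = Σ_{1≤j<k≤N} c_{jk}·M_{jk}(p) for all p ∈ R[X_1,…,X_N]. -/

import Mathlib

/-
With `a i = D (X i)` one has `D = ∑ i, a i • ∂ᵢ` and `D (X·X) = 2 ∑ i, X i * a i`, so, `2` being
regular, `D (X·X) = 0` says that `a` is a syzygy of the variables. Every such syzygy comes from a
skew-symmetric matrix (the Koszul complex of `X 0, …, X (N-1)` is exact in degree one): the monomials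
of `a i` whose least variable is some `X j` with `j < i` give `b i j * X j`, and the remaining part
of `a i`, which involves no variable below `X i`, is read off from the syzygy after setting these
variables to zero and dividing by `X i`. Regrouping `∑ i, a i • ∂ᵢ` by pairs `j < k` turns it into
`∑ b k j • M_{jk}`; conversely every `M_{jk}` kills `X·X`.
-/

open MvPolynomial

/-- The rotation generator `M_{jk} p = X_j ∂_k p − X_k ∂_j p`. -/
noncomputable def rot {R : Type*} [CommRing R] {N : ℕ} (j k : Fin N)
    (p : MvPolynomial (Fin N) R) : MvPolynomial (Fin N) R :=
  X j * pderiv k p - X k * pderiv j p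

/-- The Laplacian `Δ p = Σ_j ∂_j² p`. -/
noncomputable def lap {R : Type*} [CommRing R] {N : ℕ}
    (p : MvPolynomial (Fin N) R) : MvPolynomial (Fin N) R :=
  ∑ j, pderiv j (pderiv j p)

/-- The polynomial `X·X = X_1² + ⋯ + X_N²`. -/
noncomputable def XX (R : Type*) [CommRing R] (N : ℕ) : MvPolynomial (Fin N) R :=
  ∑ j, X j ^ 2

namespace MvPolynomial

variable {R σ : Type*} [CommRing R]

lemma derivation_eq_sum_pderiv_smul [Fintype σ] {A : Type*} [AddCommGroup A]
    [Module (MvPolynomial σ R) A] [Module R A] [IsScalarTower R (MvPolynomial σ R) A]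
    (D : Derivation R (MvPolynomial σ R) A) (p : MvPolynomial σ R) :
    D p = ∑ i, pderiv i p • D (X i) := by
  classical
  induction p using MvPolynomial.induction_on with
  | C r => simp [derivation_C]
  | add p q hp hq => simp only [map_add, hp, hq, add_smul, Finset.sum_add_distrib]
  | mul_X p n hp =>
    simp [Derivation.leibniz, hp, pderiv_X, Pi.single_apply, add_smul, Finset.sum_add_distrib,
      Finset.smul_sum, mul_smul]

lemma eq_zero_of_smul_eq_zero {c : R} (hc : c ∈ nonZeroDivisors R) {p : MvPolynomial σ R}
    (h : c • p = 0) : p = 0 := by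
  ext m
  exact mem_nonZeroDivisors_iff_right.mp hc _ (by simpa [mul_comm] using congrArg (coeff m) h)

noncomputable def divX (i : σ) : MvPolynomial σ R →ₗ[R] MvPolynomial σ R where
  toFun p := p.divMonomial (Finsupp.single i 1)
  map_add' p q := add_divMonomial p q _
  map_smul' c p := by ext; simp

@[simp]
lemma coeff_divX (i : σ) (p : MvPolynomial σ R) (s : σ →₀ ℕ) :
    coeff s (divX i p) = coeff (Finsupp.single i 1 + s) p :=
  rfl

@[simp]
lemma divX_X_mul_self (i : σ) (p : MvPolynomial σ R) : divX i (X i * p) = p :=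
  X_mul_divMonomial i p

lemma divX_X_mul_of_ne {i k : σ} (h : k ≠ i) (p : MvPolynomial σ R) :
    divX i (X k * p) = X k * divX i p := by
  classical
  ext s
  rw [coeff_divX, coeff_X_mul', coeff_X_mul', coeff_divX]
  simp only [Finsupp.mem_support_iff, Finsupp.add_apply, Finsupp.single_eq_of_ne h, zero_add]
  split_ifs with hs
  · rw [add_tsub_assoc_of_le (Finsupp.single_le_iff.mpr (Nat.one_le_iff_ne_zero.mpr hs))]
  · rfl

section LinearOrder

variable [LinearOrder σ]

noncomputable def killBelow (i : σ) : MvPolynomial σ R →ₐ[R] MvPolynomial σ R :=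
  aeval fun k => if k < i then 0 else X k

@[simp]
lemma killBelow_X (i k : σ) :
    killBelow i (X k : MvPolynomial σ R) = if k < i then 0 else X k :=
  aeval_X _ _

open Classical in
lemma killBelow_monomial (i : σ) (α : σ →₀ ℕ) (c : R) :
    killBelow i (monomial α c) = if ∀ k < i, α k = 0 then monomial α c else 0 := by
  rw [killBelow, aeval_monomial, monomial_eq, Finsupp.prod, Finsupp.prod, algebraMap_eq]
  split_ifs with h
  · congr 1
    refine Finset.prod_congr rfl fun k hk => ?_
    rw [if_neg fun hki => Finsupp.mem_support_iff.mp hk (h k hki)]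
  · push Not at h
    obtain ⟨k, hki, hk⟩ := h
    rw [Finset.prod_eq_zero (Finsupp.mem_support_iff.mpr hk) (by simp [hki, hk]), mul_zero]

open Classical in
lemma coeff_killBelow (i : σ) (q : MvPolynomial σ R) (α : σ →₀ ℕ) :
    coeff α (killBelow i q) = if ∀ k < i, α k = 0 then coeff α q else 0 := by
  induction q using MvPolynomial.induction_on' with
  | monomial β c =>
    rw [killBelow_monomial]
    obtain rfl | hβ := eq_or_ne β α
    · split_ifs <;> simp
    · split_ifs <;> simp [coeff_monomial, hβ]
  | add p q hp hq => simp only [map_add, coeff_add, hp, hq]; split_ifs <;> simp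

lemma _root_.Finsupp.isLeast_support_iff {M : Type*} [Zero M] {α : σ →₀ M} {j : σ} :
    IsLeast (α.support : Set σ) j ↔ α j ≠ 0 ∧ ∀ k < j, α k = 0 := by
  simp only [IsLeast, lowerBounds, Finset.mem_coe, Finsupp.mem_support_iff, Set.mem_ofPred_eq]
  refine and_congr_right fun _ => ⟨fun h k hk => ?_, fun h k hk => ?_⟩
  · by_contra hne; exact (h hne).not_gt hk
  · by_contra hlt; exact hk (h k (not_le.mp hlt))

open Classical in
lemma coeff_X_mul_divX_killBelow (j : σ) (q : MvPolynomial σ R) (α : σ →₀ ℕ) :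
    coeff α (X j * divX j (killBelow j q)) =
      if IsLeast (α.support : Set σ) j then coeff α q else 0 := by
  rw [coeff_X_mul', coeff_divX, coeff_killBelow, Finsupp.isLeast_support_iff]
  simp only [Finsupp.mem_support_iff]
  by_cases hj : α j = 0
  · simp [hj]
  · rw [add_tsub_cancel_of_le (Finsupp.single_le_iff.mpr (Nat.one_le_iff_ne_zero.mpr hj))]
    simp [hj]

variable [Fintype σ]

lemma eq_killBelow_add_sum (i : σ) (q : MvPolynomial σ R) :
    q = killBelow i q + ∑ j ∈ Finset.univ.filter (· < i), X j * divX j (killBelow j q) := by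
  classical
  ext α
  simp only [coeff_add, coeff_sum, coeff_X_mul_divX_killBelow, coeff_killBelow]
  by_cases hα : ∃ k < i, α k ≠ 0
  · obtain ⟨k, hki, hk⟩ := hα
    have hsupp : α.support.Nonempty := ⟨k, Finsupp.mem_support_iff.mpr hk⟩
    set m := α.support.min' hsupp
    have hm : IsLeast (α.support : Set σ) m := α.support.isLeast_min' hsupp
    have hmi : m < i := (hm.2 (Finsupp.mem_support_iff.mpr hk)).trans_lt hki
    rw [if_neg fun h => (Finsupp.isLeast_support_iff.mp hm).1 (h m hmi), zero_add,
      Finset.sum_eq_single_of_mem m (by simpa using hmi) fun j _ hjm => if_neg fun hj =>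
        hjm (hj.unique hm), if_pos hm]
  · push Not at hα
    rw [if_pos hα, Finset.sum_eq_zero fun j hj => if_neg fun hl =>
      (Finsupp.isLeast_support_iff.mp hl).1 (hα j (by simpa using hj)), add_zero]

lemma killBelow_eq_neg_sum_of_sum_X_mul_eq_zero {a : σ → MvPolynomial σ R}
    (h : ∑ k, X k * a k = 0) (i : σ) :
    killBelow i (a i) = -∑ k ∈ Finset.univ.filter (i < ·), X k * divX i (killBelow i (a k)) := by
  classical
  have hterm : ∀ k, divX i (killBelow i (X k * a k)) =
      (if k = i then killBelow i (a i) else 0) +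
        if i < k then X k * divX i (killBelow i (a k)) else 0 := by
    intro k
    rcases lt_trichotomy k i with hki | rfl | hik
    · simp [hki, hki.ne, hki.not_gt]
    · simp
    · simp [hik.not_gt, hik.ne', hik, divX_X_mul_of_ne hik.ne']
  have := congrArg (divX i ∘ killBelow i) h
  simp only [Function.comp_apply, map_sum, hterm, Finset.sum_add_distrib, Finset.sum_ite_eq',
    Finset.mem_univ, if_true, ← Finset.sum_filter, map_zero] at this
  exact eq_neg_of_add_eq_zero_left this

theorem exists_of_sum_X_mul_eq_zero {a : σ → MvPolynomial σ R} (h : ∑ k, X k * a k = 0) :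
    ∃ b : σ → σ → MvPolynomial σ R, ∀ i, a i =
      ∑ j ∈ Finset.univ.filter (· < i), b i j * X j -
        ∑ k ∈ Finset.univ.filter (i < ·), b k i * X k := by
  refine ⟨fun i j => divX j (killBelow j (a i)), fun i => ?_⟩
  conv_lhs => rw [eq_killBelow_add_sum i (a i), killBelow_eq_neg_sum_of_sum_X_mul_eq_zero h i]
  simp only [mul_comm (X _)]
  ring

end LinearOrder
end MvPolynomial

section Rotations

variable {R : Type*} [CommRing R] {N : ℕ}

lemma derivation_XX (D : Derivation R (MvPolynomial (Fin N) R) (MvPolynomial (Fin N) R)) :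
    D (XX R N) = (2 : R) • ∑ i, X i * D (X i) := by
  simp [XX, Derivation.leibniz_pow, Finset.smul_sum, two_smul]

lemma pderiv_XX (k : Fin N) : pderiv k (XX R N) = 2 * X k := by
  simp [XX, pderiv_X, Pi.single_apply]

lemma rot_XX (j k : Fin N) : rot j k (XX R N) = 0 := by
  rw [rot, pderiv_XX, pderiv_XX]; ring

lemma sum_mul_pderiv_eq_sum_rot (b : Fin N → Fin N → MvPolynomial (Fin N) R)
    (p : MvPolynomial (Fin N) R) :
    ∑ i, (∑ j ∈ Finset.univ.filter (· < i), b i j * X j -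
        ∑ k ∈ Finset.univ.filter (i < ·), b k i * X k) * pderiv i p =
      ∑ j, ∑ k ∈ Finset.univ.filter (j < ·), b k j * rot j k p := by
  simp only [rot, mul_sub, sub_mul, Finset.sum_mul, Finset.sum_sub_distrib, mul_assoc]
  rw [Finset.sum_comm' (t' := Finset.univ) (s' := fun j => Finset.univ.filter (j < ·)) (by simp)]

end Rotations

theorem stmt3_general {R : Type*} [CommRing R] {N : ℕ}
    (h2 : (2 : R) ∈ nonZeroDivisors R)
    (D : Derivation R (MvPolynomial (Fin N) R) (MvPolynomial (Fin N) R)) :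
    D (XX R N) = 0 ↔
      ∃ c : Fin N → Fin N → MvPolynomial (Fin N) R,
        ∀ p, D p = ∑ j : Fin N, ∑ k ∈ Finset.univ.filter (fun k => j < k),
          c j k * rot j k p := by
  constructor
  · intro hD
    have hsyz : ∑ k, X k * D (X k) = 0 :=
      eq_zero_of_smul_eq_zero h2 (by rwa [← derivation_XX])
    obtain ⟨b, hb⟩ := exists_of_sum_X_mul_eq_zero hsyz
    refine ⟨fun j k => b k j, fun p => ?_⟩
    rw [derivation_eq_sum_pderiv_smul, ← sum_mul_pderiv_eq_sum_rot b p]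
    exact Finset.sum_congr rfl fun i _ => by rw [smul_eq_mul, mul_comm, ← hb i]
  · rintro ⟨c, hc⟩
    simp [hc, rot_XX]

/-- if `2` is not a zero divisor in `R`, an `R`-linear derivation `D` on
`R[X_1,…,X_N]` annihilates `X·X` iff it is an `R[X_1,…,X_N]`-linear combination of
the rotation generators `M_{jk}`. -/
theorem stmt3 {R : Type*} [CommRing R] {N : ℕ} (hN : 0 < N)
    (h2 : (2 : R) ∈ nonZeroDivisors R)
    (D : Derivation R (MvPolynomial (Fin N) R) (MvPolynomial (Fin N) R)) :
    D (XX R N) = 0 ↔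
      ∃ c : Fin N → Fin N → MvPolynomial (Fin N) R,
        ∀ p, D p = ∑ j : Fin N, ∑ k ∈ Finset.univ.filter (fun k => j < k),
          c j k * rot j k p :=
  stmt3_general h2 D
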